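/- No impermeable block can be formed from the rules φ2, φ3, φ11: for every p ≥ 1, every assignment of rules ψ_1, …, ψ_p with each ψ_j ∈ {φ2, φ3, φ11}, and every value block b ∈ {0,1}^p, there exist two pairs of boundary sequences (u, v) and (u′, v′) from ℕ to {0,1}, a cell 1 ≤ j ≤ p, and a time t ≥ 0 such that the block evolution y_j(t) computed with boundary (u, v) differs from the block evolution y′_j(t) computed with boundary (u′, v′). -/
import Mathlib


/-- A Boolean rule: a function `{0,1} × {0,1} → {0,1}`. -/
abbrev Rule : Type := Bool → Bool → Bool

/-- Block evolution: cells `1,…,p` carry rules `ψ 1, …, ψ p` and initial values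
`b 1, …, b p`; positions `0` and `p+1` are boundary cells whose value at time `t`
is `u t`, resp. `v t`; interior cells evolve by `y_j(t+1) = ψ_j(y_{j-1}(t), y_{j+1}(t))`. -/
def blockEvolve (p : ℕ) (ψ : ℕ → Rule) (b u v : ℕ → Bool) : ℕ → ℕ → Bool
  | 0, j => if j = 0 then u 0 else if j = p + 1 then v 0 else b j
  | t+1, j =>
      if j = 0 then u (t+1) else if j = p + 1 then v (t+1)
      else ψ j (blockEvolve p ψ b u v t (j-1)) (blockEvolve p ψ b u v t (j+1))

/-- The rule `φ2`: `φ2(x,y) = 1` iff `(x,y) = (0,1)`. -/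
def phi2 : Rule := fun x y => !x && y
/-- The rule `φ3(x,y) = 1 - x`. -/
def phi3 : Rule := fun x _ => !x
/-- The rule `φ11`: `φ11(x,y) = 0` iff `(x,y) = (1,0)`. -/
def phi11 : Rule := fun x y => !(x && !y)

lemma be_step (p : ℕ) (ψ : ℕ → Rule) (b u v : ℕ → Bool) (t j : ℕ)
    (h0 : j ≠ 0) (h1 : j ≠ p + 1) :
    blockEvolve p ψ b u v (t+1) j
      = ψ j (blockEvolve p ψ b u v t (j-1)) (blockEvolve p ψ b u v t (j+1)) := by
  simp [blockEvolve, h0, h1]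

lemma be_left (p : ℕ) (ψ : ℕ → Rule) (b u v : ℕ → Bool) (t : ℕ) :
    blockEvolve p ψ b u v t 0 = u t := by
  cases t <;> simp [blockEvolve]

lemma be_right (p : ℕ) (ψ : ℕ → Rule) (b u v : ℕ → Bool) (t : ℕ) :
    blockEvolve p ψ b u v t (p+1) = v t := by
  cases t <;> simp [blockEvolve]

lemma key (r : Rule) (hr : r ∈ ({phi2, phi3, phi11} : Set Rule)) (ε c : Bool)
    (h : r ε c = ε) : c = ε := by
  simp only [Set.mem_insert_iff, Set.mem_singleton_iff] at hr
  rcases hr with rfl | rfl | rfl <;> cases ε <;> cases c <;>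
    simp_all [phi2, phi3, phi11]

/-- no impermeable block can be formed from the rules φ2, φ3, φ11:
for every `p ≥ 1`, every assignment of rules from `{φ2, φ3, φ11}` to cells `1,…,p`
and every value block `b`, there are two choices of boundary sequences, a cell
`1 ≤ j ≤ p` and a time `t` where the two block evolutions differ. -/
theorem stmt19 (p : ℕ) (hp : 1 ≤ p) (ψ : ℕ → Rule)
    (hψ : ∀ j : ℕ, 1 ≤ j → j ≤ p → ψ j ∈ ({phi2, phi3, phi11} : Set Rule))
    (b : ℕ → Bool) :
    ∃ (u v u' v' : ℕ → Bool) (j t : ℕ), 1 ≤ j ∧ j ≤ p ∧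
      blockEvolve p ψ b u v t j ≠ blockEvolve p ψ b u' v' t j := by
  by_contra hcon
  push_neg at hcon
  rcases eq_or_lt_of_le hp with hp1 | hp2
  · -- p = 1
    have h11 : ∀ (c d : Bool),
        blockEvolve p ψ b (fun _ => c) (fun _ => d) 1 1 = ψ 1 c d := by
      intro c d
      rw [show (1:ℕ) = 0 + 1 from rfl, be_step p ψ b _ _ 0 1 one_ne_zero (by omega)]
      rw [show (1:ℕ) - 1 = 0 from rfl, be_left]
      rw [show (1:ℕ) + 1 = p + 1 by omega, be_right]
    have h := hcon (fun _ => false) (fun _ => true) (fun _ => true) (fun _ => false)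
      1 1 le_rfl hp
    rw [h11, h11] at h
    rcases hψ 1 le_rfl hp with h2 | h3 | hh
    · rw [h2] at h; simp [phi2] at h
    · rw [h3] at h; simp [phi3] at h
    · rw [hh] at h; simp [phi11] at h
  · -- 2 ≤ p
    set Y : ℕ → ℕ → Bool := blockEvolve p ψ b (fun _ => false) (fun _ => false) with hYdef
    have hY : ∀ (u v : ℕ → Bool) (t j : ℕ), 1 ≤ j → j ≤ p →
        blockEvolve p ψ b u v t j = Y t j :=
      fun u v t j h1 h2 => hcon u v (fun _ => false) (fun _ => false) j t h1 h2
    have hbase : ∀ (c : Bool) (t : ℕ), Y (t+1) 1 = ψ 1 c (Y t 2) := by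
      intro c t
      have h1 := hY (fun _ => c) (fun _ => false) (t+1) 1 le_rfl hp
      rw [be_step p ψ b _ _ t 1 one_ne_zero (by omega)] at h1
      rw [show (1:ℕ) - 1 = 0 from rfl, be_left] at h1
      rw [show (1:ℕ) + 1 = 2 from rfl,
        hY (fun _ => c) (fun _ => false) t 2 (by omega) hp2] at h1
      exact h1.symm
    obtain ⟨ε, hε1, hε2⟩ : ∃ ε : Bool, (∀ t, Y (t+1) 1 = ε) ∧ (∀ t, Y t 2 = ε) := by
      rcases hψ 1 le_rfl hp with h2 | h3 | hh
      · refine ⟨false, fun t => ?_, fun t => ?_⟩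
        · have := hbase true t; rw [h2] at this; simpa [phi2] using this
        · have ha := hbase false t; have hb := hbase true t
          rw [h2] at ha hb; simp [phi2] at ha hb; rw [← ha, hb]
      · exfalso
        have ha := hbase false 0; have hb := hbase true 0
        rw [h3] at ha hb; simp [phi3] at ha hb; rw [ha] at hb; exact absurd hb (by simp)
      · refine ⟨true, fun t => ?_, fun t => ?_⟩
        · have := hbase false t; rw [hh] at this; simpa [phi11] using this
        · have ha := hbase true t; have hb := hbase false t
          rw [hh] at ha hb; simp [phi11] at ha hb; rw [← ha, hb]
    have hP : ∀ k : ℕ, ((k+1 ≤ p → ∀ t, k+1 ≤ t → Y t (k+1) = ε)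
        ∧ (k+2 ≤ p → ∀ t, k+1 ≤ t → Y t (k+2) = ε)) := by
      intro k
      induction k with
      | zero =>
        refine ⟨fun _ t ht => ?_, fun _ t _ => hε2 t⟩
        cases t with
        | zero => omega
        | succ s => exact hε1 s
      | succ k ih =>
        refine ⟨fun hk t ht => ih.2 hk t (by omega), fun hk t ht => ?_⟩
        have hrec := be_step p ψ b (fun _ => false) (fun _ => false) t (k+2)
          (by omega) (by omega)
        rw [show k+2-1 = k+1 from rfl, show k+2+1 = k+3 from rfl] at hrec
        rw [← hYdef] at hrec
        rw [ih.1 (by omega) t (by omega), ih.2 (by omega) (t+1) (by omega)] at hrec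
        exact key _ (hψ (k+2) (by omega) (by omega)) ε _ hrec.symm
    have hS : ∀ j : ℕ, 1 ≤ j → j ≤ p → ∀ t, j ≤ t → Y t j = ε := by
      intro j h1 h2 t ht
      obtain ⟨k, rfl⟩ : ∃ k, j = k + 1 := ⟨j - 1, by omega⟩
      exact (hP k).1 h2 t ht
    have hcell : ∀ c : Bool, ψ p ε c = ε := by
      intro c
      have h1 := hY (fun _ => false) (fun _ => c) (p+1) p hp le_rfl
      rw [be_step p ψ b _ _ p p (by omega) (by omega)] at h1
      rw [be_right p ψ b _ _ p] at h1
      rw [hY (fun _ => false) (fun _ => c) p (p-1) (by omega) (by omega)] at h1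
      rw [hS (p-1) (by omega) (by omega) p (by omega)] at h1
      rw [hS p hp le_rfl (p+1) (by omega)] at h1
      exact h1
    have t1 := key _ (hψ p hp le_rfl) ε true (hcell true)
    have t2 := key _ (hψ p hp le_rfl) ε false (hcell false)
    rw [← t1] at t2
    exact absurd t2 (by simp)
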